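/- Call two subsets J, J' ⊆ Π with |J| = |J'| adjacent if J = J' or there exists K ⊆ Π with J ⊆ K, J' ⊆ K, |K| = |J| + 1, and Δ_J and Δ_{J'} conjugate under W_K (i.e., u(Δ_J) = Δ_{J'} for some u ∈ W_K). If I, I' ⊆ Π and there exists w ∈ W with w(Δ_I) = Δ_{I'}, then there exists a finite chain I = J₀, J₁, …, J_k = I' of subsets of Π such that J_{i−1} and J_i are adjacent for each i = 1, …, k. -/

import Mathlib

open scoped RealInnerProductSpace

/-- A finite reduced crystallographic root system spanning a real inner
product space `V` (whose inner product is automatically invariant under the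
Weyl group, since the reflections are isometries), together with a fixed
system of positive roots and the corresponding simple roots. -/
structure RootSystemData (V : Type)
    [NormedAddCommGroup V] [InnerProductSpace ℝ V] : Type where
  roots : Finset V
  pos : Finset V
  simples : Finset V
  zero_not_mem : (0 : V) ∉ roots
  span_roots : Submodule.span ℝ (roots : Set V) = ⊤
  crystallographic : ∀ α ∈ roots, ∀ β ∈ roots,
    ∃ n : ℤ, 2 * ⟪α, β⟫ = (n : ℝ) * ⟪β, β⟫
  reduced : ∀ α ∈ roots, ∀ t : ℝ, t • α ∈ roots → t = 1 ∨ t = -1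
  reflect_mem : ∀ α ∈ roots, ∀ β ∈ roots,
    β - (2 * ⟪β, α⟫ / ⟪α, α⟫) • α ∈ roots
  pos_subset : pos ⊆ roots
  mem_pos_or_neg_mem_pos : ∀ α ∈ roots, α ∈ pos ∨ -α ∈ pos
  neg_not_pos : ∀ α ∈ pos, -α ∉ pos
  simples_subset : simples ⊆ pos
  simples_linearIndependent : LinearIndependent ℝ (fun α : simples => (α : V))
  pos_sum_of_simples : ∀ β ∈ pos, ∃ c : V →₀ ℕ,
    (c.support : Set V) ⊆ (simples : Set V) ∧ β = c.sum fun α n => (n : ℝ) • α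

namespace RootSystemData

variable {V : Type} [NormedAddCommGroup V] [InnerProductSpace ℝ V]
variable (R : RootSystemData V)

/-- `β₁ > β₂` : the difference `β₁ - β₂` is a nonempty sum of positive roots. -/
def Gt (x y : V) : Prop :=
  ∃ m : Multiset V, m ≠ 0 ∧ (∀ z ∈ m, z ∈ R.pos) ∧ x - y = m.sum

/-- `β₁ ≥ β₂` : either `β₁ > β₂` or `β₁ = β₂`. -/
def Ge (x y : V) : Prop := R.Gt x y ∨ x = y

/-- An antichain: a set of pairwise incomparable positive roots. -/
def IsRootAntichain (A : Set V) : Prop :=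
  A ⊆ (R.pos : Set V) ∧ ∀ x ∈ A, ∀ y ∈ A, x ≠ y → ¬ R.Ge x y ∧ ¬ R.Ge y x

/-- An orthogonal antichain: an antichain of pairwise orthogonal positive roots. -/
def IsOrthAntichain (A : Set V) : Prop :=
  R.IsRootAntichain A ∧ ∀ x ∈ A, ∀ y ∈ A, x ≠ y → ⟪x, y⟫ = 0

/-- The complement, inside the open dominant Weyl chamber, of the hyperplane
arrangement `⟨β,·⟩ = 1`, `β ∈ Δ⁺`. -/
def chamberSet : Set V :=
  {χ | (∀ α ∈ R.simples, 0 < ⟪α, χ⟫) ∧ ∀ β ∈ R.pos, ⟪β, χ⟫ ≠ 1}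

/-- A region: a connected component of `chamberSet`. -/
def IsRegion (F : Set V) : Prop :=
  ∃ χ ∈ R.chamberSet, F = connectedComponentIn R.chamberSet χ

/-- The positive roots `β` with `⟨β,·⟩ < 1` on `F`. -/
def ltOne (F : Set V) : Set V := {β | β ∈ R.pos ∧ ∀ χ ∈ F, ⟪β, χ⟫ < 1}

/-- The positive roots `β` with `⟨β,·⟩ > 1` on `F`. -/
def gtOne (F : Set V) : Set V := {β | β ∈ R.pos ∧ ∀ χ ∈ F, 1 < ⟪β, χ⟫}

/-- `δ(F)`: the maximal roots among the positive roots `β` with `⟨β,·⟩ < 1` on `F`. -/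
def deltaLow (F : Set V) : Set V :=
  {β | β ∈ R.ltOne F ∧ ∀ β' ∈ R.ltOne F, ¬ R.Gt β' β}

/-- `δ'(F)`: the minimal roots among the positive roots `β` with `⟨β,·⟩ > 1` on `F`. -/
def deltaHigh (F : Set V) : Set V :=
  {β | β ∈ R.gtOne F ∧ ∀ β' ∈ R.gtOne F, ¬ R.Gt β β'}

/-- Simply laced: all roots have the same length, normalized so `⟨β,β⟩ = 2`. -/
def SimplyLaced : Prop := ∀ β ∈ R.roots, ⟪β, β⟫ = 2

/-- Irreducibility: the set of roots admits no nontrivial partition into two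
mutually orthogonal parts. -/
def IsIrreducible : Prop :=
  ∀ S : Set V, S ⊆ (R.roots : Set V) →
    (∀ a ∈ S, ∀ b ∈ (R.roots : Set V) \ S, ⟪a, b⟫ = 0) →
    S = ∅ ∨ S = (R.roots : Set V)

/-- The height of a positive root: the sum of its (unique) coordinates in the
simple roots. -/
noncomputable def height (β : V) : ℕ :=
  letI := Classical.propDecidable (∃ c : V →₀ ℕ, (c.support : Set V) ⊆ (R.simples : Set V) ∧
      β = c.sum (fun α n => (n : ℝ) • α))
  if h : ∃ c : V →₀ ℕ, (c.support : Set V) ⊆ (R.simples : Set V) ∧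
      β = c.sum (fun α n => (n : ℝ) • α)
  then (Classical.choose h).sum fun _ n => n
  else 0

/-- The root system has the Cartan–Killing type given by the (simply laced)
Cartan matrix `A`: there is an indexing of the simple roots under which, in the
normalization `⟨β,β⟩ = 2`, the inner products of simple roots are the entries
of `A`. -/
def HasType {n : ℕ} (A : Matrix (Fin n) (Fin n) ℤ) : Prop :=
  ∃ e : Fin n ≃ {x // x ∈ R.simples},
    ∀ i j, ⟪((e i : V)), ((e j : V))⟫ = (A i j : ℝ)

/-- The reflections `s_β`, `β ∈ S`, as linear isometries of `V`. -/
def reflectionsOn (S : Set V) : Set (V ≃ₗᵢ[ℝ] V) :=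
  {g | ∃ β ∈ S, ∀ v, g v = v - (2 * ⟪v, β⟫ / ⟪β, β⟫) • β}

/-- The Weyl group `W`, generated by the reflections in all roots. -/
def weyl : Subgroup (V ≃ₗᵢ[ℝ] V) :=
  Subgroup.closure (reflectionsOn (R.roots : Set V))

/-- `Δ_S = Δ ∩ span_ℝ(S)`. -/
def rootsIn (S : Set V) : Set V :=
  {β | β ∈ R.roots ∧ β ∈ Submodule.span ℝ S}

/-- `Δ_S⁺ = Δ⁺ ∩ span_ℝ(S)`. -/
def posIn (S : Set V) : Set V :=
  {β | β ∈ R.pos ∧ β ∈ Submodule.span ℝ S}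

/-- The inversion set `N(w) = {β ∈ Δ⁺ : w(β) ∈ -Δ⁺}`. -/
def inversionSet (w : V ≃ₗᵢ[ℝ] V) : Set V :=
  {β | β ∈ R.pos ∧ -(w β) ∈ R.pos}

end RootSystemData

/-- The subgroup of isometries generated by the reflections `s_β`, `β ∈ S`. -/
def reflectionSubgroup {V : Type} [NormedAddCommGroup V] [InnerProductSpace ℝ V]
    (S : Set V) : Subgroup (V ≃ₗᵢ[ℝ] V) :=
  Subgroup.closure (RootSystemData.reflectionsOn S)

/-- Two subsets `J, J' ⊆ Π` of the same cardinality are adjacent if they are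
equal, or both lie in some `K ⊆ Π` with `|K| = |J| + 1` such that `Δ_J` and
`Δ_J'` are conjugate under `W_K`. -/
def AdjacentLevis {V : Type} [NormedAddCommGroup V] [InnerProductSpace ℝ V]
    (R : RootSystemData V) (J J' : Finset V) : Prop :=
  J.card = J'.card ∧
  (J = J' ∨ ∃ K : Finset V, K ⊆ R.simples ∧ J ⊆ K ∧ J' ⊆ K ∧
    K.card = J.card + 1 ∧
    ∃ u ∈ reflectionSubgroup (↑K : Set V), (⇑u) '' R.rootsIn ↑J = R.rootsIn ↑J')

/-!
Induct on the number of inversions `|N(w)|`. If `N(w) = ∅` then `w = 1` by the exchange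
condition, so `I = I'`. Otherwise some simple root `α` has `w α < 0`. If `α ∈ I`, then `s_α`
preserves `Δ_I`, and `w s_α` has one inversion fewer. If `α ∉ I`, put `K = I ∪ {α}` and take
`w₁ = w u⁻¹` with fewest inversions in the coset `w W_K`. Minimality forces `w₁ K ⊆ Δ⁺`, so `w₁`
keeps `Δ_K⁺` positive without lowering heights; hence `I₁ = w₁⁻¹ I'` is a subset of `K`, the
sets `I` and `I₁` are adjacent through `u(Δ_I) = Δ_{I₁}`, and `w₁` carries `Δ_{I₁}` to `Δ_{I'}`
with fewer inversions than `w`.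
-/

section Reflection

variable {V : Type} [NormedAddCommGroup V] [InnerProductSpace ℝ V]

noncomputable def reflectionIn (β : V) : V ≃ₗᵢ[ℝ] V := (ℝ ∙ β)ᗮ.reflection

theorem reflectionIn_apply (β v : V) :
    reflectionIn β v = v - (2 * ⟪v, β⟫ / ⟪β, β⟫) • β := by
  rw [reflectionIn, Submodule.reflection_orthogonal_apply, Submodule.reflection_singleton_apply,
    real_inner_self_eq_norm_sq, real_inner_comm]
  simp only [RCLike.ofReal_real_eq_id, id, neg_sub, mul_div_assoc]
  rw [← smul_assoc, nsmul_eq_mul, Nat.cast_ofNat]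

@[simp]
theorem reflectionIn_reflectionIn (β v : V) : reflectionIn β (reflectionIn β v) = v :=
  Submodule.reflection_reflection _ v

theorem reflectionIn_inv (β : V) : (reflectionIn β)⁻¹ = reflectionIn β :=
  Submodule.reflection_inv

theorem reflectionIn_mul_self (β : V) : reflectionIn β * reflectionIn β = 1 :=
  Submodule.reflection_mul_reflection _

theorem reflectionIn_neg (β : V) : reflectionIn (-β) = reflectionIn β := by
  ext v
  simp [reflectionIn_apply, neg_div]

theorem reflectionIn_self {β : V} (hβ : β ≠ 0) : reflectionIn β β = -β := by
  rw [reflectionIn_apply, mul_div_assoc, div_self (inner_self_ne_zero.2 hβ)]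
  module

theorem reflectionIn_map (w : V ≃ₗᵢ[ℝ] V) (β : V) :
    reflectionIn (w β) = w * reflectionIn β * w⁻¹ := by
  ext v
  have h : ⟪w.symm v, β⟫ = ⟪v, w β⟫ := by
    rw [← w.inner_map_map, w.apply_symm_apply]
  simp [reflectionIn_apply, h]

theorem reflectionIn_mem_reflectionsOn {S : Set V} {β : V} (hβ : β ∈ S) :
    reflectionIn β ∈ RootSystemData.reflectionsOn S :=
  ⟨β, hβ, reflectionIn_apply β⟩

theorem exists_eq_reflectionIn_of_mem_reflectionsOn {S : Set V} {g : V ≃ₗᵢ[ℝ] V}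
    (hg : g ∈ RootSystemData.reflectionsOn S) : ∃ β ∈ S, g = reflectionIn β := by
  obtain ⟨β, hβ, hg⟩ := hg
  exact ⟨β, hβ, LinearIsometryEquiv.ext fun v => by rw [hg, reflectionIn_apply]⟩

theorem inv_mem_reflectionsOn {S : Set V} {g : V ≃ₗᵢ[ℝ] V}
    (hg : g ∈ RootSystemData.reflectionsOn S) : g⁻¹ ∈ RootSystemData.reflectionsOn S := by
  obtain ⟨β, hβ, rfl⟩ := exists_eq_reflectionIn_of_mem_reflectionsOn hg
  rw [reflectionIn_inv]
  exact reflectionIn_mem_reflectionsOn hβ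

theorem reflectionSubgroup_mono {S T : Set V} (h : S ⊆ T) :
    reflectionSubgroup S ≤ reflectionSubgroup T :=
  Subgroup.closure_mono fun _ ⟨β, hβ, hg⟩ => ⟨β, h hβ, hg⟩

theorem exists_list_of_mem_reflectionSubgroup {S : Set V} {w : V ≃ₗᵢ[ℝ] V}
    (hw : w ∈ reflectionSubgroup S) :
    ∃ L : List (V ≃ₗᵢ[ℝ] V), (∀ g ∈ L, g ∈ RootSystemData.reflectionsOn S) ∧ L.prod = w := by
  rw [reflectionSubgroup, ← Subgroup.mem_toSubmonoid, Subgroup.closure_toSubmonoid] at hw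
  obtain ⟨L, hL, hprod⟩ := Submonoid.exists_list_of_mem_closure hw
  refine ⟨L, fun g hg => (hL g hg).elim id fun h => ?_, hprod⟩
  simpa using inv_mem_reflectionsOn (Set.mem_inv.1 h)

end Reflection

namespace RootSystemData

variable {V : Type} [NormedAddCommGroup V] [InnerProductSpace ℝ V] (R : RootSystemData V)

theorem ne_zero_of_mem_roots {β : V} (hβ : β ∈ R.roots) : β ≠ 0 :=
  fun h => R.zero_not_mem (h ▸ hβ)

theorem inner_self_pos_of_mem_roots {β : V} (hβ : β ∈ R.roots) : 0 < ⟪β, β⟫ :=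
  real_inner_self_pos.2 (R.ne_zero_of_mem_roots hβ)

theorem mem_roots_of_mem_simples {α : V} (hα : α ∈ R.simples) : α ∈ R.roots :=
  R.pos_subset (R.simples_subset hα)

theorem not_mem_pos_of_neg_mem_pos {β : V} (hβ : -β ∈ R.pos) : β ∉ R.pos := by
  simpa using R.neg_not_pos (-β) hβ

theorem one_le_two_mul_inner_div {α β : V} (hα : α ∈ R.roots) (hβ : β ∈ R.roots)
    (h : 0 < ⟪β, α⟫) : 1 ≤ 2 * ⟪β, α⟫ / ⟪α, α⟫ := by
  obtain ⟨n, hn⟩ := R.crystallographic β hβ α hα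
  have hαα := R.inner_self_pos_of_mem_roots hα
  have hc : 2 * ⟪β, α⟫ / ⟪α, α⟫ = n := by rw [div_eq_iff hαα.ne', hn]
  have : (0 : ℝ) < n := hc ▸ by positivity
  rw [hc]
  exact_mod_cast this

theorem reflectionIn_mem_roots {α β : V} (hα : α ∈ R.roots) (hβ : β ∈ R.roots) :
    reflectionIn α β ∈ R.roots := by
  rw [reflectionIn_apply]
  exact R.reflect_mem α hα β hβ

theorem mapsTo_rootsIn {S : Set V} (hS : S ⊆ R.roots) {u : V ≃ₗᵢ[ℝ] V}
    (hu : u ∈ reflectionSubgroup S) : Set.MapsTo u (R.rootsIn S) (R.rootsIn S) := by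
  have hgen : ∀ β ∈ S, Set.MapsTo (reflectionIn β) (R.rootsIn S) (R.rootsIn S) := by
    rintro β hβ x ⟨hx, hxS⟩
    refine ⟨R.reflectionIn_mem_roots (hS hβ) hx, ?_⟩
    rw [reflectionIn_apply]
    exact sub_mem hxS (Submodule.smul_mem _ _ (Submodule.subset_span hβ))
  induction hu using Subgroup.closure_induction'' with
  | mem g hg =>
    obtain ⟨β, hβ, rfl⟩ := exists_eq_reflectionIn_of_mem_reflectionsOn hg
    exact hgen β hβ
  | inv_mem g hg =>
    obtain ⟨β, hβ, rfl⟩ := exists_eq_reflectionIn_of_mem_reflectionsOn hg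
    rw [reflectionIn_inv]
    exact hgen β hβ
  | one => exact Set.mapsTo_id _
  | mul x y _ _ hx hy => exact hx.comp hy

theorem image_rootsIn_of_mem_reflectionSubgroup {S : Set V} (hS : S ⊆ R.roots)
    {u : V ≃ₗᵢ[ℝ] V} (hu : u ∈ reflectionSubgroup S) : u '' R.rootsIn S = R.rootsIn S :=
  (R.mapsTo_rootsIn hS hu).image_subset.antisymm fun y hy =>
    ⟨u⁻¹ y, R.mapsTo_rootsIn hS (inv_mem hu) hy, u.apply_symm_apply y⟩

theorem apply_mem_roots {w : V ≃ₗᵢ[ℝ] V} (hw : w ∈ R.weyl) {β : V} (hβ : β ∈ R.roots) :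
    w β ∈ R.roots :=
  (R.mapsTo_rootsIn subset_rfl hw ⟨hβ, Submodule.subset_span hβ⟩).1

theorem reflectionSubgroup_le_weyl {S : Set V} (hS : S ⊆ R.roots) :
    reflectionSubgroup S ≤ R.weyl :=
  reflectionSubgroup_mono hS

theorem reflectionIn_mem_weyl {β : V} (hβ : β ∈ R.roots) : reflectionIn β ∈ R.weyl :=
  Subgroup.subset_closure (reflectionIn_mem_reflectionsOn hβ)

theorem image_rootsIn {w : V ≃ₗᵢ[ℝ] V} (hw : w ∈ R.weyl) (S : Set V) :
    w '' R.rootsIn S = R.rootsIn (w '' S) := by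
  ext y
  rw [w.image_eq_preimage_symm, Set.mem_preimage]
  have hspan : y ∈ Submodule.span ℝ (w '' S) ↔ w.symm y ∈ Submodule.span ℝ S := by
    conv_lhs => rw [← w.apply_symm_apply y]
    exact Submodule.apply_mem_span_image_iff_mem_span (f := w.toLinearEquiv.toLinearMap)
      w.injective
  refine and_congr ⟨fun h => ?_, fun h => ?_⟩ hspan.symm
  · simpa using R.apply_mem_roots hw h
  · exact R.apply_mem_roots (inv_mem hw) h

theorem mem_span_simples_of_mem_pos {β : V} (hβ : β ∈ R.pos) :
    β ∈ Submodule.span ℝ (R.simples : Set V) := by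
  obtain ⟨c, hc, rfl⟩ := R.pos_sum_of_simples β hβ
  exact Submodule.finsuppSum_mem _ _ _ _ fun α hα =>
    Submodule.smul_mem _ _ (Submodule.subset_span (hc (Finsupp.mem_support_iff.2 hα)))

theorem span_simples : Submodule.span ℝ (R.simples : Set V) = ⊤ := by
  rw [eq_top_iff, ← R.span_roots, Submodule.span_le]
  intro β hβ
  rcases R.mem_pos_or_neg_mem_pos β hβ with h | h
  · exact R.mem_span_simples_of_mem_pos h
  · simpa using neg_mem (R.mem_span_simples_of_mem_pos h)

noncomputable def simpleBasis : Module.Basis R.simples ℝ V :=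
  Module.Basis.mk R.simples_linearIndependent (by simp [R.span_simples])

-- identically zero when `δ ∉ Π`
open Classical in
noncomputable def coord (δ : V) : V →ₗ[ℝ] ℝ :=
  R.simpleBasis.constr ℝ fun α => if (α : V) = δ then 1 else 0

noncomputable def heightFun : V →ₗ[ℝ] ℝ := ∑ δ ∈ R.simples, R.coord δ

open Classical in
theorem coord_apply_simple {α : V} (hα : α ∈ R.simples) (δ : V) :
    R.coord δ α = if α = δ then 1 else 0 := by
  simpa [simpleBasis, coord] using R.simpleBasis.constr_basis ℝ
    (fun α : R.simples => if (α : V) = δ then (1 : ℝ) else 0) ⟨α, hα⟩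

theorem sum_coord_smul (v : V) : ∑ δ ∈ R.simples, R.coord δ v • δ = v := by
  have : ∑ δ ∈ R.simples, (R.coord δ).smulRight δ = LinearMap.id :=
    R.simpleBasis.ext fun α => by
      classical
      simp [simpleBasis, R.coord_apply_simple α.2, Finset.sum_ite_eq]
  simpa using LinearMap.congr_fun this v

theorem heightFun_apply (v : V) : R.heightFun v = ∑ δ ∈ R.simples, R.coord δ v := by
  simp [heightFun]

theorem heightFun_simple {α : V} (hα : α ∈ R.simples) : R.heightFun α = 1 := by
  classical
  simp [heightFun_apply, R.coord_apply_simple hα, hα]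

theorem coord_eq_zero_of_mem_span {T : Set V} (hT : T ⊆ R.simples) {δ : V} (hδ : δ ∉ T)
    {v : V} (hv : v ∈ Submodule.span ℝ T) : R.coord δ v = 0 := by
  have : Submodule.span ℝ T ≤ LinearMap.ker (R.coord δ) := by
    rw [Submodule.span_le]
    intro α hα
    simp [R.coord_apply_simple (hT hα), show α ≠ δ from fun h => hδ (h ▸ hα)]
  exact this hv

theorem mem_of_mem_simples_of_mem_span {T : Set V} (hT : T ⊆ R.simples) {α : V}
    (hα : α ∈ R.simples) (h : α ∈ Submodule.span ℝ T) : α ∈ T := by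
  by_contra hαT
  simpa [R.coord_apply_simple hα] using R.coord_eq_zero_of_mem_span hT hαT h

theorem exists_coord_eq_natCast_of_mem_pos {β : V} (hβ : β ∈ R.pos) (δ : V) :
    ∃ n : ℕ, R.coord δ β = n := by
  classical
  obtain ⟨c, hc, rfl⟩ := R.pos_sum_of_simples β hβ
  refine ⟨c δ, ?_⟩
  rw [map_finsuppSum, Finsupp.sum]
  calc ∑ α ∈ c.support, R.coord δ ((c α : ℝ) • α)
      = ∑ α ∈ c.support, if α = δ then (c α : ℝ) else 0 :=
        Finset.sum_congr rfl fun α hα => by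
          rw [map_smul, R.coord_apply_simple (hc hα), smul_eq_mul, mul_ite, mul_one, mul_zero]
    _ = c δ := by
        rw [Finset.sum_ite_eq']
        split_ifs with h
        · rfl
        · simp [Finsupp.notMem_support_iff.1 h]

theorem coord_nonneg_of_mem_pos {β : V} (hβ : β ∈ R.pos) (δ : V) : 0 ≤ R.coord δ β := by
  obtain ⟨n, hn⟩ := R.exists_coord_eq_natCast_of_mem_pos hβ δ
  rw [hn]
  positivity

theorem exists_coord_ne_zero {v : V} (hv : v ≠ 0) : ∃ δ ∈ R.simples, R.coord δ v ≠ 0 := by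
  by_contra! h
  apply hv
  rw [← R.sum_coord_smul v]
  exact Finset.sum_eq_zero fun δ hδ => by simp [h δ hδ]

theorem one_le_heightFun {β : V} (hβ : β ∈ R.pos) : 1 ≤ R.heightFun β := by
  obtain ⟨δ, hδ, hne⟩ := R.exists_coord_ne_zero (R.ne_zero_of_mem_roots (R.pos_subset hβ))
  obtain ⟨n, hn⟩ := R.exists_coord_eq_natCast_of_mem_pos hβ δ
  have hn1 : (1 : ℝ) ≤ n := by
    rw [hn] at hne
    exact_mod_cast Nat.one_le_iff_ne_zero.2 (by exact_mod_cast hne)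
  rw [heightFun_apply]
  exact (hn ▸ hn1).trans
    (Finset.single_le_sum (fun ε _ => R.coord_nonneg_of_mem_pos hβ ε) hδ)

theorem mem_pos_iff_heightFun_pos {β : V} (hβ : β ∈ R.roots) :
    β ∈ R.pos ↔ 0 < R.heightFun β := by
  refine ⟨fun h => by linarith [R.one_le_heightFun h], fun h => ?_⟩
  by_contra hβp
  have := R.one_le_heightFun ((R.mem_pos_or_neg_mem_pos β hβ).resolve_left hβp)
  rw [map_neg] at this
  linarith

/-- A positive root `β ≠ α` has a positive coordinate along some simple root other than `α`,
and `s_α` does not change that coordinate. -/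
theorem reflectionIn_mem_pos_ne {α : V} (hα : α ∈ R.simples) {β : V} (hβ : β ∈ R.pos)
    (hne : β ≠ α) : reflectionIn α β ∈ R.pos ∧ reflectionIn α β ≠ α := by
  have hαr := R.mem_roots_of_mem_simples hα
  obtain ⟨γ, hγ, hγα, hβγ⟩ : ∃ γ ∈ R.simples, γ ≠ α ∧ R.coord γ β ≠ 0 := by
    by_contra! h
    have hβα : β = R.coord α β • α := by
      conv_lhs => rw [← R.sum_coord_smul β]
      exact Finset.sum_eq_single_of_mem α hα fun γ hγ hγα => by rw [h γ hγ hγα, zero_smul]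
    rcases R.reduced α hαr _ (hβα ▸ R.pos_subset hβ) with h1 | h1
    · exact hne (by rw [hβα, h1, one_smul])
    · linarith [R.coord_nonneg_of_mem_pos hβ α]
  have hcoord : R.coord γ (reflectionIn α β) = R.coord γ β := by
    simp [reflectionIn_apply, R.coord_apply_simple hα, hγα.symm]
  refine ⟨?_, fun h => ?_⟩
  · have hroot := R.reflectionIn_mem_roots hαr (R.pos_subset hβ)
    refine (R.mem_pos_or_neg_mem_pos _ hroot).resolve_right fun hneg => hβγ ?_
    have := R.coord_nonneg_of_mem_pos hneg γ
    rw [map_neg, hcoord] at this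
    linarith [R.coord_nonneg_of_mem_pos hβ γ]
  · have : β = -α := by
      rw [← reflectionIn_reflectionIn α β, h, reflectionIn_self (R.ne_zero_of_mem_roots hαr)]
    exact R.neg_not_pos α (R.simples_subset hα) (this ▸ hβ)

theorem exists_simple_inner_pos {γ : V} (hγ : γ ∈ R.pos) : ∃ α ∈ R.simples, 0 < ⟪γ, α⟫ := by
  by_contra! h
  have : ⟪γ, γ⟫ ≤ 0 := by
    nth_rw 2 [← R.sum_coord_smul γ]
    rw [inner_sum]
    exact Finset.sum_nonpos fun δ hδ => by
      rw [real_inner_smul_right]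
      exact mul_nonpos_of_nonneg_of_nonpos (R.coord_nonneg_of_mem_pos hγ δ) (h δ hδ)
  linarith [R.inner_self_pos_of_mem_roots (R.pos_subset hγ)]

theorem exists_reflectionIn_heightFun_lt {γ : V} (hγ : γ ∈ R.pos) (hγs : γ ∉ R.simples) :
    ∃ α ∈ R.simples, reflectionIn α γ ∈ R.pos ∧
      R.heightFun (reflectionIn α γ) + 1 ≤ R.heightFun γ := by
  obtain ⟨α, hα, hpos⟩ := R.exists_simple_inner_pos hγ
  refine ⟨α, hα, (R.reflectionIn_mem_pos_ne hα hγ fun h => hγs (h ▸ hα)).1, ?_⟩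
  have := R.one_le_two_mul_inner_div (R.mem_roots_of_mem_simples hα) (R.pos_subset hγ) hpos
  rw [reflectionIn_apply, map_sub, map_smul, R.heightFun_simple hα, smul_eq_mul, mul_one]
  linarith

theorem mem_simples_of_heightFun_le_one {γ : V} (hγ : γ ∈ R.pos) (h : R.heightFun γ ≤ 1) :
    γ ∈ R.simples := by
  by_contra hγs
  obtain ⟨α, -, hpos, hlt⟩ := R.exists_reflectionIn_heightFun_lt hγ hγs
  linarith [R.one_le_heightFun hpos]

theorem heightFun_le_heightFun_apply {K : Set V} (hK : K ⊆ R.simples) {w : V ≃ₗᵢ[ℝ] V}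
    (hpos : ∀ δ ∈ K, w δ ∈ R.pos) {γ : V} (hγ : γ ∈ R.pos) (hγK : γ ∈ Submodule.span ℝ K) :
    R.heightFun γ ≤ R.heightFun (w γ) := by
  calc R.heightFun γ = ∑ δ ∈ R.simples, R.coord δ γ := R.heightFun_apply γ
    _ ≤ ∑ δ ∈ R.simples, R.coord δ γ * R.heightFun (w δ) := Finset.sum_le_sum fun δ _ => by
        by_cases hδ : δ ∈ K
        · exact le_mul_of_one_le_right (R.coord_nonneg_of_mem_pos hγ δ)
            (R.one_le_heightFun (hpos δ hδ))
        · simp [R.coord_eq_zero_of_mem_span hK hδ hγK]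
    _ = R.heightFun (w γ) := by
        conv_rhs => rw [← R.sum_coord_smul γ]
        simp [map_sum]

theorem apply_mem_pos_of_forall_mem_pos {K : Set V} (hK : K ⊆ R.simples)
    {w : V ≃ₗᵢ[ℝ] V} (hw : w ∈ R.weyl) (hpos : ∀ δ ∈ K, w δ ∈ R.pos) {γ : V}
    (hγ : γ ∈ R.pos) (hγK : γ ∈ Submodule.span ℝ K) : w γ ∈ R.pos :=
  (R.mem_pos_iff_heightFun_pos (R.apply_mem_roots hw (R.pos_subset hγ))).2 <| by
    linarith [R.one_le_heightFun hγ, R.heightFun_le_heightFun_apply hK hpos hγ hγK]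

theorem mem_of_apply_mem_simples {K : Set V} (hK : K ⊆ R.simples) {w : V ≃ₗᵢ[ℝ] V}
    (hw : w ∈ R.weyl) (hpos : ∀ δ ∈ K, w δ ∈ R.pos) {γ : V} (hγ : γ ∈ R.roots)
    (hγK : γ ∈ Submodule.span ℝ K) (hwγ : w γ ∈ R.simples) : γ ∈ K := by
  have hγp : γ ∈ R.pos := (R.mem_pos_or_neg_mem_pos γ hγ).resolve_right fun hneg => by
    have := R.apply_mem_pos_of_forall_mem_pos hK hw hpos hneg (neg_mem hγK)
    rw [map_neg] at this
    exact R.not_mem_pos_of_neg_mem_pos this (R.simples_subset hwγ)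
  refine R.mem_of_mem_simples_of_mem_span hK (R.mem_simples_of_heightFun_le_one hγp ?_) hγK
  linarith [R.heightFun_le_heightFun_apply hK hpos hγp hγK, R.heightFun_simple hwγ]

theorem reflectionIn_mem_reflectionSubgroup_simples {β : V} (hβ : β ∈ R.pos) :
    reflectionIn β ∈ reflectionSubgroup (R.simples : Set V) := by
  obtain ⟨n, hn⟩ := exists_nat_ge (R.heightFun β)
  induction n generalizing β with
  | zero =>
    push_cast at hn
    linarith [R.one_le_heightFun hβ]
  | succ n ih =>
    by_cases hβs : β ∈ R.simples
    · exact Subgroup.subset_closure (reflectionIn_mem_reflectionsOn hβs)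
    obtain ⟨α, hα, hpos, hlt⟩ := R.exists_reflectionIn_heightFun_lt hβ hβs
    have hsα : reflectionIn α ∈ reflectionSubgroup (R.simples : Set V) :=
      Subgroup.subset_closure (reflectionIn_mem_reflectionsOn hα)
    have hconj : reflectionIn β =
        reflectionIn α * reflectionIn (reflectionIn α β) * (reflectionIn α)⁻¹ := by
      rw [← reflectionIn_map, reflectionIn_reflectionIn]
    rw [hconj]
    exact mul_mem (mul_mem hsα (ih hpos (by push_cast at hn; linarith))) (inv_mem hsα)

theorem weyl_le_reflectionSubgroup_simples :
    R.weyl ≤ reflectionSubgroup (R.simples : Set V) := by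
  refine Subgroup.closure_le _ |>.2 fun g hg => ?_
  obtain ⟨β, hβ, rfl⟩ := exists_eq_reflectionIn_of_mem_reflectionsOn hg
  rcases R.mem_pos_or_neg_mem_pos β hβ with h | h
  · exact R.reflectionIn_mem_reflectionSubgroup_simples h
  · simpa [reflectionIn_neg] using R.reflectionIn_mem_reflectionSubgroup_simples h

theorem inversionSet_finite (w : V ≃ₗᵢ[ℝ] V) : (R.inversionSet w).Finite :=
  R.pos.finite_toSet.subset fun _ hβ => hβ.1

theorem inversionSet_mul_reflectionIn_diff {α : V} (hα : α ∈ R.simples) (w : V ≃ₗᵢ[ℝ] V) :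
    R.inversionSet (w * reflectionIn α) \ {α} = reflectionIn α '' (R.inversionSet w \ {α}) := by
  ext β
  rw [(reflectionIn α).image_eq_preimage_symm]
  have hiff : reflectionIn α β ∈ R.pos ∧ reflectionIn α β ≠ α ↔ β ∈ R.pos ∧ β ≠ α :=
    ⟨fun h => by simpa using R.reflectionIn_mem_pos_ne hα h.1 h.2,
      fun h => R.reflectionIn_mem_pos_ne hα h.1 h.2⟩
  simp only [inversionSet, Set.mem_sdiff, Set.mem_ofPred_eq, Set.mem_singleton_iff,
    Set.mem_preimage, LinearIsometryEquiv.coe_mul, Function.comp_apply]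
  change _ ↔ (reflectionIn α β ∈ R.pos ∧ _) ∧ _
  tauto

theorem ncard_inversionSet_mul_reflectionIn {α : V} (hα : α ∈ R.simples)
    {w : V ≃ₗᵢ[ℝ] V} (hwα : -(w α) ∈ R.pos) :
    (R.inversionSet (w * reflectionIn α)).ncard + 1 = (R.inversionSet w).ncard := by
  have hα' : α ∉ R.inversionSet (w * reflectionIn α) := fun h => by
    have := h.2
    rw [LinearIsometryEquiv.coe_mul, Function.comp_apply,
      reflectionIn_self (R.ne_zero_of_mem_roots (R.mem_roots_of_mem_simples hα)),
      map_neg, neg_neg] at this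
    exact R.not_mem_pos_of_neg_mem_pos hwα this
  have hαw : α ∈ R.inversionSet w := ⟨R.simples_subset hα, hwα⟩
  rw [← Set.ncard_sdiff_singleton_add_one hαw (R.inversionSet_finite w),
    ← Set.sdiff_singleton_eq_self hα', R.inversionSet_mul_reflectionIn_diff hα,
    Set.ncard_image_of_injective _ (reflectionIn α).injective]

theorem exists_simple_apply_neg {w : V ≃ₗᵢ[ℝ] V} (hw : w ∈ R.weyl)
    (hne : (R.inversionSet w).Nonempty) : ∃ α ∈ R.simples, -(w α) ∈ R.pos := by
  by_contra! h
  obtain ⟨β, hβ, hwβ⟩ := hne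
  have hpos : ∀ α ∈ (R.simples : Set V), w α ∈ R.pos := fun α hα =>
    (R.mem_pos_or_neg_mem_pos _
      (R.apply_mem_roots hw (R.mem_roots_of_mem_simples hα))).resolve_right (h α hα)
  exact R.not_mem_pos_of_neg_mem_pos hwβ
    (R.apply_mem_pos_of_forall_mem_pos subset_rfl hw hpos hβ (R.mem_span_simples_of_mem_pos hβ))

theorem list_prod_mem_weyl {L : List (V ≃ₗᵢ[ℝ] V)}
    (hL : ∀ g ∈ L, g ∈ reflectionsOn (R.simples : Set V)) : L.prod ∈ R.weyl :=
  R.weyl.list_prod_mem fun g hg =>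
    R.reflectionSubgroup_le_weyl (fun _ h => R.mem_roots_of_mem_simples h)
      (Subgroup.subset_closure (hL g hg))

theorem exists_list_prod_eq_mul_reflectionIn {L : List (V ≃ₗᵢ[ℝ] V)}
    (hL : ∀ g ∈ L, g ∈ reflectionsOn (R.simples : Set V)) {α : V} (hα : α ∈ R.simples)
    (hneg : -(L.prod α) ∈ R.pos) :
    ∃ L' : List (V ≃ₗᵢ[ℝ] V), (∀ g ∈ L', g ∈ reflectionsOn (R.simples : Set V)) ∧
      L'.length + 1 = L.length ∧ L'.prod = L.prod * reflectionIn α := by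
  induction L with
  | nil => exact absurd (R.simples_subset hα) (by simpa using R.not_mem_pos_of_neg_mem_pos hneg)
  | cons g T ih =>
    obtain ⟨β, hβ, rfl⟩ := exists_eq_reflectionIn_of_mem_reflectionsOn (hL g List.mem_cons_self)
    have hT : ∀ g ∈ T, g ∈ reflectionsOn (R.simples : Set V) :=
      fun g hg => hL g (List.mem_cons_of_mem _ hg)
    rw [List.prod_cons, LinearIsometryEquiv.coe_mul, Function.comp_apply] at hneg
    rcases R.mem_pos_or_neg_mem_pos _
        (R.apply_mem_roots (R.list_prod_mem_weyl hT) (R.mem_roots_of_mem_simples hα)) with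
      hpos | hTneg
    · -- only `s_β` itself can turn the positive root `T.prod α` negative
      have hTα : T.prod α = β := by
        by_contra hne
        exact R.not_mem_pos_of_neg_mem_pos hneg (R.reflectionIn_mem_pos_ne hβ hpos hne).1
      refine ⟨T, hT, rfl, ?_⟩
      rw [List.prod_cons, ← hTα, reflectionIn_map, inv_mul_cancel_right, mul_assoc,
        reflectionIn_mul_self, mul_one]
    · obtain ⟨T', hT', hlen, hprod⟩ := ih hT hTneg
      refine ⟨reflectionIn β :: T', ?_, by simp [← hlen], ?_⟩
      · simpa [hL _ List.mem_cons_self] using hT'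
      · rw [List.prod_cons, List.prod_cons, hprod, mul_assoc]

theorem eq_one_of_inversionSet_eq_empty {w : V ≃ₗᵢ[ℝ] V} (hw : w ∈ R.weyl)
    (h : R.inversionSet w = ∅) : w = 1 := by
  obtain ⟨L, hL, rfl⟩ :=
    exists_list_of_mem_reflectionSubgroup (R.weyl_le_reflectionSubgroup_simples hw)
  clear hw
  induction hn : L.length using Nat.strong_induction_on generalizing L with
  | _ n ih =>
  rcases L.eq_nil_or_concat' with rfl | ⟨M, g, rfl⟩
  · rfl
  obtain ⟨α, hα, rfl⟩ := exists_eq_reflectionIn_of_mem_reflectionsOn (hL g (by simp))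
  have hM : ∀ g ∈ M, g ∈ reflectionsOn (R.simples : Set V) := fun g hg => hL g (by simp [hg])
  have hprod : (M ++ [reflectionIn α]).prod α = -(M.prod α) := by
    simp [reflectionIn_self (R.ne_zero_of_mem_roots (R.mem_roots_of_mem_simples hα))]
  rcases R.mem_pos_or_neg_mem_pos _
      (R.apply_mem_roots (R.list_prod_mem_weyl hM) (R.mem_roots_of_mem_simples hα)) with
    hpos | hneg
  · have : α ∈ R.inversionSet (M ++ [reflectionIn α]).prod :=
      ⟨R.simples_subset hα, by rwa [hprod, neg_neg]⟩
    exact (Set.eq_empty_iff_forall_notMem.1 h α this).elim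
  · obtain ⟨M', hM', hlen, hM'prod⟩ := R.exists_list_prod_eq_mul_reflectionIn hM hα hneg
    rw [List.prod_append, List.prod_singleton, ← hM'prod] at h ⊢
    exact ih M'.length (by simp at hn; omega) M' hM' h rfl

theorem span_rootsIn {J : Set V} (hJ : J ⊆ R.simples) :
    Submodule.span ℝ (R.rootsIn J) = Submodule.span ℝ J :=
  le_antisymm (Submodule.span_le.2 fun _ hx => hx.2) <| Submodule.span_mono fun _ hα =>
    ⟨R.mem_roots_of_mem_simples (hJ hα), Submodule.subset_span hα⟩

theorem card_eq_of_image_rootsIn {J J' : Finset V} (hJ : J ⊆ R.simples) (hJ' : J' ⊆ R.simples)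
    (w : V ≃ₗᵢ[ℝ] V) (hmap : w '' R.rootsIn J = R.rootsIn J') : J.card = J'.card := by
  have hfinrank : ∀ {T : Finset V}, T ⊆ R.simples →
      Module.finrank ℝ (Submodule.span ℝ (R.rootsIn T)) = T.card := fun hT => by
    rw [R.span_rootsIn (by exact_mod_cast hT)]
    exact finrank_span_finset_eq_card (LinearIndepOn.mono
      (show LinearIndepOn ℝ id (R.simples : Set V) from R.simples_linearIndependent)
      (by exact_mod_cast hT))
  rw [← hfinrank hJ, ← hfinrank hJ', ← hmap, show (w : V → V) = w.toLinearEquiv from rfl,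
    Submodule.span_image_linearEquiv, LinearEquiv.finrank_map_eq]

theorem eq_of_rootsIn_eq {J J' : Finset V} (hJ : J ⊆ R.simples) (hJ' : J' ⊆ R.simples)
    (h : R.rootsIn J = R.rootsIn J') : J = J' := by
  have key : ∀ {A B : Finset V}, A ⊆ R.simples → B ⊆ R.simples →
      R.rootsIn A = R.rootsIn B → A ⊆ B := by
    intro A B hA hB hAB α hα
    have : α ∈ R.rootsIn (A : Set V) :=
      ⟨R.mem_roots_of_mem_simples (hA hα), Submodule.subset_span hα⟩
    exact_mod_cast R.mem_of_mem_simples_of_mem_span (by exact_mod_cast hB) (hA hα) (hAB ▸ this).2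
  exact (key hJ hJ' h).antisymm (key hJ' hJ h.symm)

theorem exists_shortest_in_coset {K : Set V} (hK : K ⊆ R.simples) {w : V ≃ₗᵢ[ℝ] V}
    (hw : w ∈ R.weyl) :
    ∃ u ∈ reflectionSubgroup K,
      (∀ u' ∈ reflectionSubgroup K,
        (R.inversionSet (w * u⁻¹)).ncard ≤ (R.inversionSet (w * u'⁻¹)).ncard) ∧
      ∀ β ∈ K, (w * u⁻¹) β ∈ R.pos := by
  have hKroots : K ⊆ R.roots := fun β hβ => R.mem_roots_of_mem_simples (hK hβ)
  obtain ⟨u, hu, hmin⟩ := (measure fun u => (R.inversionSet (w * u⁻¹)).ncard).wf.has_min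
    (reflectionSubgroup K : Set (V ≃ₗᵢ[ℝ] V)) ⟨1, one_mem _⟩
  have hmin' : ∀ u' ∈ reflectionSubgroup K,
      (R.inversionSet (w * u⁻¹)).ncard ≤ (R.inversionSet (w * u'⁻¹)).ncard :=
    fun u' hu' => not_lt.1 (hmin u' hu')
  refine ⟨u, hu, hmin', fun β hβ => ?_⟩
  have hw₁ : w * u⁻¹ ∈ R.weyl := mul_mem hw (inv_mem (R.reflectionSubgroup_le_weyl hKroots hu))
  refine (R.mem_pos_or_neg_mem_pos _ (R.apply_mem_roots hw₁ (hKroots hβ))).resolve_right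
    fun hneg => ?_
  have hshorter := R.ncard_inversionSet_mul_reflectionIn (hK hβ) hneg
  have := hmin' (reflectionIn β * u)
    (mul_mem (Subgroup.subset_closure (reflectionIn_mem_reflectionsOn hβ)) hu)
  rw [mul_inv_rev, reflectionIn_inv, ← mul_assoc] at this
  omega

theorem exists_adjacentLevis_step {w : V ≃ₗᵢ[ℝ] V} (hw : w ∈ R.weyl) {I I' : Finset V}
    (hI : I ⊆ R.simples) (hI' : I' ⊆ R.simples) (hmap : w '' R.rootsIn I = R.rootsIn I')
    {α : V} (hα : α ∈ R.simples) (hαI : α ∉ I) (hwα : -(w α) ∈ R.pos) :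
    ∃ I₁ : Finset V, ∃ w₁ ∈ R.weyl, AdjacentLevis R I I₁ ∧ I₁ ⊆ R.simples ∧
      (R.inversionSet w₁).ncard < (R.inversionSet w).ncard ∧
      w₁ '' R.rootsIn I₁ = R.rootsIn I' := by
  classical
  set K := insert α I
  have hK : K ⊆ R.simples := Finset.insert_subset hα hI
  have hKroots : (K : Set V) ⊆ R.roots := fun β hβ => R.mem_roots_of_mem_simples (hK hβ)
  obtain ⟨u, hu, hmin, hpos⟩ := R.exists_shortest_in_coset (K := K) (by exact_mod_cast hK) hw
  set w₁ := w * u⁻¹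
  have hw₁ : w₁ ∈ R.weyl := mul_mem hw (inv_mem (R.reflectionSubgroup_le_weyl hKroots hu))
  have hlt : (R.inversionSet w₁).ncard < (R.inversionSet w).ncard := by
    have := hmin (reflectionIn α)
      (Subgroup.subset_closure (reflectionIn_mem_reflectionsOn (by simp [K])))
    rw [reflectionIn_inv] at this
    linarith [R.ncard_inversionSet_mul_reflectionIn hα hwα]
  set I₁ := I'.image w₁.symm
  have hI₁ : R.rootsIn I₁ = w₁.symm '' R.rootsIn I' := by
    rw [Finset.coe_image]
    exact (R.image_rootsIn (inv_mem hw₁) I').symm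
  have hu_image : u '' R.rootsIn I = R.rootsIn I₁ := by
    rw [hI₁, ← hmap, Set.image_image]
    refine Set.image_congr fun x _ => ?_
    rw [eq_comm, LinearIsometryEquiv.symm_apply_eq]
    simp [w₁]
  have hI₁K : I₁ ⊆ K := by
    intro γ hγ
    obtain ⟨δ, hδ, rfl⟩ := Finset.mem_image.1 hγ
    have hδ₁ : w₁.symm δ ∈ R.rootsIn I₁ := by
      rw [hI₁]
      exact ⟨δ, ⟨R.mem_roots_of_mem_simples (hI' hδ), Submodule.subset_span hδ⟩, rfl⟩
    have hIK : R.rootsIn I ⊆ R.rootsIn K := fun x hx =>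
      ⟨hx.1, Submodule.span_mono (by simp [K]) hx.2⟩
    have hδK := Set.image_mono hIK (hu_image ▸ hδ₁)
    rw [R.image_rootsIn_of_mem_reflectionSubgroup hKroots hu] at hδK
    exact_mod_cast R.mem_of_apply_mem_simples (by exact_mod_cast hK) hw₁ hpos hδK.1 hδK.2
      (by simpa using hI' hδ)
  refine ⟨I₁, w₁, hw₁, ⟨R.card_eq_of_image_rootsIn hI (hI₁K.trans hK) u hu_image,
    Or.inr ⟨K, hK, Finset.subset_insert α I, hI₁K, Finset.card_insert_of_notMem hαI, u, hu,
      hu_image⟩⟩, hI₁K.trans hK, hlt, ?_⟩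
  rw [hI₁, Set.image_image]
  simp

theorem reflTransGen_adjacentLevis {w : V ≃ₗᵢ[ℝ] V} (hw : w ∈ R.weyl) {I I' : Finset V}
    (hI : I ⊆ R.simples) (hI' : I' ⊆ R.simples) (hmap : w '' R.rootsIn I = R.rootsIn I') :
    Relation.ReflTransGen (AdjacentLevis R) I I' := by
  induction hn : (R.inversionSet w).ncard using Nat.strong_induction_on generalizing w I with
  | _ n ih =>
  rcases (R.inversionSet w).eq_empty_or_nonempty with hempty | hne
  · obtain rfl := R.eq_one_of_inversionSet_eq_empty hw hempty
    obtain rfl : I = I' := R.eq_of_rootsIn_eq hI hI' (by simpa using hmap)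
    exact .refl
  obtain ⟨α, hα, hwα⟩ := R.exists_simple_apply_neg hw hne
  by_cases hαI : α ∈ I
  · have hsα : reflectionIn α ∈ reflectionSubgroup (I : Set V) :=
      Subgroup.subset_closure (reflectionIn_mem_reflectionsOn hαI)
    refine ih _ (by linarith [R.ncard_inversionSet_mul_reflectionIn hα hwα])
      (mul_mem hw (R.reflectionIn_mem_weyl (R.mem_roots_of_mem_simples hα))) hI ?_ rfl
    rw [LinearIsometryEquiv.coe_mul, Set.image_comp,
      R.image_rootsIn_of_mem_reflectionSubgroup (fun β hβ => R.mem_roots_of_mem_simples (hI hβ))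
        hsα, hmap]
  · obtain ⟨I₁, w₁, hw₁, hadj, hI₁, hlt, hmap₁⟩ :=
      R.exists_adjacentLevis_step hw hI hI' hmap hα hαI hwα
    exact .head hadj (ih _ (hn ▸ hlt) hw₁ hI₁ hmap₁ rfl)

end RootSystemData

theorem AdjacentLevis.subset_simples {V : Type} [NormedAddCommGroup V] [InnerProductSpace ℝ V]
    {R : RootSystemData V} {J J' : Finset V} (h : AdjacentLevis R J J') (hJ : J ⊆ R.simples) :
    J' ⊆ R.simples := by
  obtain ⟨-, rfl | ⟨K, hK, -, hJ'K, -⟩⟩ := h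
  exacts [hJ, hJ'K.trans hK]

theorem Relation.ReflTransGen.exists_seq {α : Type*} {r : α → α → Prop} {a b : α}
    (h : Relation.ReflTransGen r a b) :
    ∃ (k : ℕ) (f : ℕ → α), f 0 = a ∧ f k = b ∧ ∀ i < k, r (f i) (f (i + 1)) := by
  induction h using Relation.ReflTransGen.head_induction_on with
  | refl => exact ⟨0, fun _ => b, rfl, rfl, by simp⟩
  | @head a c hac _ ih =>
    obtain ⟨k, f, hf0, hfk, hf⟩ := ih
    refine ⟨k + 1, fun n => Nat.casesOn n a f, rfl, hfk, fun i hi => ?_⟩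
    cases i with
    | zero => simpa [hf0] using hac
    | succ i => exact hf i (by omega)

theorem statement14_general {V : Type} [NormedAddCommGroup V] [InnerProductSpace ℝ V]
    (R : RootSystemData V)
    (I I' : Finset V) (hI : I ⊆ R.simples) (hI' : I' ⊆ R.simples)
    (w : V ≃ₗᵢ[ℝ] V) (hw : w ∈ R.weyl)
    (hmap : (⇑w) '' R.rootsIn ↑I = R.rootsIn ↑I') :
    ∃ (k : ℕ) (J : ℕ → Finset V), J 0 = I ∧ J k = I' ∧
      (∀ i ≤ k, J i ⊆ R.simples) ∧
      ∀ i < k, AdjacentLevis R (J i) (J (i + 1)) := by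
  obtain ⟨k, J, hJ0, hJk, hadj⟩ := (R.reflTransGen_adjacentLevis hw hI hI' hmap).exists_seq
  refine ⟨k, J, hJ0, hJk, fun i hi => ?_, hadj⟩
  induction i with
  | zero => exact hJ0 ▸ hI
  | succ i ih => exact (hadj i hi).subset_simples (ih (by omega))

/-- If `w ∈ W` maps `Δ_I` to `Δ_I'`, then `I` and `I'` are connected by a chain
of adjacent subsets of `Π`. -/
theorem statement14 {V : Type} [NormedAddCommGroup V] [InnerProductSpace ℝ V]
    [FiniteDimensional ℝ V] (R : RootSystemData V)
    (I I' : Finset V) (hI : I ⊆ R.simples) (hI' : I' ⊆ R.simples)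
    (w : V ≃ₗᵢ[ℝ] V) (hw : w ∈ R.weyl)
    (hmap : (⇑w) '' R.rootsIn ↑I = R.rootsIn ↑I') :
    ∃ (k : ℕ) (J : ℕ → Finset V), J 0 = I ∧ J k = I' ∧
      (∀ i ≤ k, J i ⊆ R.simples) ∧
      ∀ i < k, AdjacentLevis R (J i) (J (i + 1)) :=
  statement14_general R I I' hI hI' w hw hmap
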